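/- arXiv:0709.1331 — 5 statements merged into one kernel-verified Lean document; each statement's English description precedes it below -/
import Mathlib

section
/- For every integer m ≥ 3 and every real R > 0 one has sinh(R)^{m-2} / (∫₀^R sinh(s)^{m-2} ds) ≥ (m-2)·(e^R − 1)^{m-2} / (e^{(m-2)R} − 1). -/
/-- For every integer `m ≥ 3` and every real `R > 0`,
`sinh(R)^(m-2) / ∫₀^R sinh(s)^(m-2) ds ≥ (m-2)·(e^R − 1)^(m-2) / (e^((m-2)R) − 1)`. -/
theorem stmt_0 (m : ℕ) (hm : 3 ≤ m) (R : ℝ) (hR : 0 < R) :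
    Real.sinh R ^ (m - 2) / (∫ s in (0:ℝ)..R, Real.sinh s ^ (m - 2)) ≥
      ((m : ℝ) - 2) * (Real.exp R - 1) ^ (m - 2) / (Real.exp (((m : ℝ) - 2) * R) - 1) := by
  set n : ℕ := m - 2 with hn
  have hn1 : 1 ≤ n := by omega
  have hcast : ((m : ℝ) - 2) = (n : ℝ) := by
    have : (m : ℝ) = ((n + 2 : ℕ) : ℝ) := by congr 1; omega
    rw [this]; push_cast; ring
  rw [hcast]
  have hnpos : (0:ℝ) < (n:ℝ) := by exact_mod_cast hn1
  set c : ℝ := (1 + Real.exp (-R)) / 2 with hc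
  have hcpos : 0 < c := by positivity
  have hsinhR : Real.sinh R = c * (Real.exp R - 1) := by
    rw [Real.sinh_eq, hc, Real.exp_neg]
    field_simp
    ring
  have heR : 1 < Real.exp R := by nlinarith [Real.add_one_le_exp R]
  have henR : 1 < Real.exp ((n:ℝ) * R) := by nlinarith [Real.add_one_le_exp ((n:ℝ)*R), mul_pos hnpos hR]
  -- pointwise bound
  have hpt : ∀ s ∈ Set.Icc (0:ℝ) R, Real.sinh s ^ n ≤ c ^ n * Real.exp ((n:ℝ) * s) := by
    intro s hs
    have h1 : Real.sinh s ≤ c * Real.exp s := by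
      have : Real.sinh s ≤ Real.exp s / 2 := by
        rw [Real.sinh_eq]
        have : 0 < Real.exp (-s) := Real.exp_pos _
        linarith
      have h2 : Real.exp s / 2 ≤ c * Real.exp s := by
        have : (1:ℝ)/2 ≤ c := by
          have := Real.exp_pos (-R); rw [hc]; linarith
        nlinarith [Real.exp_pos s]
      linarith
    calc Real.sinh s ^ n ≤ (c * Real.exp s) ^ n := by
          apply pow_le_pow_left₀ (Real.sinh_nonneg_iff.mpr hs.1) h1
      _ = c ^ n * Real.exp ((n:ℝ) * s) := by
          rw [mul_pow, ← Real.exp_nat_mul]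
  -- integral of exp(n s)
  have hexpint : ∫ s in (0:ℝ)..R, Real.exp ((n:ℝ) * s)
      = (Real.exp ((n:ℝ) * R) - 1) / (n:ℝ) := by
    rw [intervalIntegral.integral_comp_mul_left (fun s => Real.exp s) (ne_of_gt hnpos)]
    rw [integral_exp, mul_zero, Real.exp_zero, smul_eq_mul]
    field_simp
  set F : ℝ := ∫ s in (0:ℝ)..R, Real.sinh s ^ n with hF
  have hFpos : 0 < F := by
    apply intervalIntegral.intervalIntegral_pos_of_pos_on
    · exact (Real.continuous_sinh.pow n).intervalIntegrable 0 R
    · intro x hx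
      exact pow_pos (Real.sinh_pos_iff.mpr hx.1) n
    · exact hR
  have hFle : F ≤ c ^ n * (Real.exp ((n:ℝ) * R) - 1) / (n:ℝ) := by
    have : F ≤ ∫ s in (0:ℝ)..R, c ^ n * Real.exp ((n:ℝ) * s) := by
      apply intervalIntegral.integral_mono_on hR.le
      · exact (Real.continuous_sinh.pow n).intervalIntegrable 0 R
      · exact (Continuous.intervalIntegrable (by continuity) 0 R)
      · exact hpt
    rw [intervalIntegral.integral_const_mul, hexpint] at this
    rw [mul_div_assoc]; exact this
  have key : Real.sinh R ^ n / F ≥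
      Real.sinh R ^ n / (c ^ n * (Real.exp ((n:ℝ) * R) - 1) / (n:ℝ)) := by
    apply div_le_div_of_nonneg_left (by positivity) hFpos hFle
  have hmid : Real.sinh R ^ n / (c ^ n * (Real.exp ((n:ℝ) * R) - 1) / (n:ℝ)) =
      (n:ℝ) * (Real.exp R - 1) ^ n / (Real.exp ((n:ℝ) * R) - 1) := by
    rw [hsinhR, mul_pow]
    have h1 : Real.exp ((n:ℝ) * R) - 1 ≠ 0 := by linarith
    have h2 : c ^ n ≠ 0 := by positivity
    field_simp
  rw [← hmid]
  exact key
end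

section
/- Let k > 0, let m ≥ 2 be an integer, and let R > 0. Set S(t) = sinh(kt)/k and define E(t) = ∫_t^R (1/S(σ)^{m-2})·(∫₀^σ S(s)^{m-2} ds) dσ for t ∈ (0,R]. Then on the interval (0,R) the function t ↦ E'(t)/S(t) is negative and strictly monotone increasing. -/
/-!
Write `n = m - 2` and `A(t) = ∫₀ᵗ Sⁿ`. Then `E'(t) = -A(t)/Sⁿ(t)`, so `E'/S = -A/Sⁿ⁺¹`, and it
suffices that `A/Sⁿ⁺¹` is positive and strictly decreasing. Its derivative has the sign of
`Sⁿ⁺¹(t) - (n+1) S'(t) A(t)`, and `Sⁿ⁺¹(t) = ∫₀ᵗ (n+1) Sⁿ S' < (n+1) S'(t) ∫₀ᵗ Sⁿ` because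
`S' = cosh(k ·)` is strictly increasing on `[0, ∞)`.
-/

open Set intervalIntegral Real

section WarpingFunction

variable {S S' : ℝ → ℝ} (n : ℕ)

theorem pow_succ_lt_mul_integral_pow (hS : ∀ x, HasDerivAt S (S' x) x) (hS'c : Continuous S')
    (hS' : StrictMonoOn S' (Ici 0)) (hS0 : S 0 = 0) (hpos : ∀ x, 0 < x → 0 < S x)
    {t : ℝ} (ht : 0 < t) : S t ^ (n + 1) < (n + 1) * S' t * ∫ x in 0..t, S x ^ n := by
  have hSc : Continuous S := continuous_iff_continuousAt.2 fun x => (hS x).continuousAt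
  have hftc : S t ^ (n + 1) = ∫ x in 0..t, (n + 1) * S x ^ n * S' x := by
    rw [integral_eq_sub_of_hasDerivAt (fun x _ => ((hS x).fun_pow (n + 1)).congr_deriv (by simp))
      ((by fun_prop : Continuous fun x => (n + 1) * S x ^ n * S' x).intervalIntegrable 0 t)]
    simp [hS0]
  have hweight : ∀ x ∈ Ioc 0 t, 0 < (n + 1) * S x ^ n := fun x hx => by
    have := hpos x hx.1; positivity
  have hlt : (∫ x in 0..t, (n + 1) * S x ^ n * S' x) < ∫ x in 0..t, (n + 1) * S x ^ n * S' t := by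
    refine integral_lt_integral_of_continuousOn_of_le_of_exists_lt ht (by fun_prop) (by fun_prop)
      (fun x hx => ?_) ⟨t / 2, ⟨by positivity, by linarith⟩, ?_⟩
    · exact mul_le_mul_of_nonneg_left
        (hS'.monotoneOn hx.1.le ht.le hx.2) (hweight x hx).le
    · exact mul_lt_mul_of_pos_left (hS' (half_pos ht).le ht.le (by linarith))
        (hweight _ ⟨by positivity, by linarith⟩)
  calc S t ^ (n + 1) < ∫ x in 0..t, (n + 1) * S x ^ n * S' t := hftc ▸ hlt
    _ = (n + 1) * S' t * ∫ x in 0..t, S x ^ n := by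
      rw [← integral_const_mul]; congr 1; ext x; ring

theorem strictAntiOn_integral_pow_div_pow_succ (hS : ∀ x, HasDerivAt S (S' x) x)
    (hS'c : Continuous S') (hS' : StrictMonoOn S' (Ici 0)) (hS0 : S 0 = 0)
    (hpos : ∀ x, 0 < x → 0 < S x) :
    StrictAntiOn (fun t => (∫ x in 0..t, S x ^ n) / S t ^ (n + 1)) (Ioi 0) := by
  have hSc : Continuous S := continuous_iff_continuousAt.2 fun x => (hS x).continuousAt
  have hA : ∀ t, HasDerivAt (fun t => ∫ x in 0..t, S x ^ n) (S t ^ n) t := fun t =>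
    ((hSc.pow n).integral_hasStrictDerivAt 0 t).hasDerivAt
  refine strictAntiOn_of_deriv_neg (convex_Ioi 0) (fun t ht => ?_) fun t ht => ?_
  · exact ((hA t).continuousAt.div (hSc.pow _).continuousAt
      (pow_pos (hpos t ht) _).ne').continuousWithinAt
  rw [interior_Ioi] at ht
  have hSt := hpos t ht
  rw [((hA t).fun_div ((hS t).fun_pow (n + 1)) (pow_pos hSt _).ne').deriv]
  refine div_neg_of_neg_of_pos ?_ (by positivity)
  have key := mul_lt_mul_of_pos_left (pow_succ_lt_mul_integral_pow n hS hS'c hS' hS0 hpos ht)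
    (pow_pos hSt n)
  push_cast
  linarith

theorem deriv_div_eq_neg_integral_pow_div_pow_succ (hSc : Continuous S)
    (hpos : ∀ x, 0 < x → 0 < S x) {E : ℝ → ℝ} {R : ℝ}
    (hE : ∀ t, E t = ∫ σ in t..R, (1 / S σ ^ n) * ∫ s in 0..σ, S s ^ n)
    {t : ℝ} (ht : 0 < t) (hR : 0 < R) :
    deriv E t / S t = -((∫ s in 0..t, S s ^ n) / S t ^ (n + 1)) := by
  have hcont : ContinuousOn (fun σ => (1 / S σ ^ n) * ∫ s in 0..σ, S s ^ n) (Ioi 0) :=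
    ContinuousOn.mul (continuousOn_const.div (hSc.pow n).continuousOn
      fun x hx => (pow_pos (hpos x hx) n).ne')
      (continuous_primitive (fun a b => (hSc.pow n).intervalIntegrable a b) 0).continuousOn
  have hsub : uIcc t R ⊆ Ioi 0 := fun x hx => lt_min ht hR |>.trans_le hx.1
  rw [funext hE, (integral_hasDerivAt_left ((hcont.mono hsub).intervalIntegrable)
    (hcont.stronglyMeasurableAtFilter isOpen_Ioi t ht)
    (hcont.continuousAt (isOpen_Ioi.mem_nhds ht))).deriv]
  have := (hpos t ht).ne'
  field_simp
  ring

end WarpingFunction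

theorem stmt_6_general (k : ℝ) (hk : 0 < k) (m : ℕ) (R : ℝ)
    (S : ℝ → ℝ) (hS : ∀ t, S t = Real.sinh (k * t) / k)
    (E : ℝ → ℝ)
    (hE : ∀ t, E t = ∫ σ in t..R, (1 / S σ ^ (m - 2)) * ∫ s in (0:ℝ)..σ, S s ^ (m - 2)) :
    (∀ t ∈ Set.Ioo 0 R, deriv E t / S t < 0) ∧
      StrictMonoOn (fun t => deriv E t / S t) (Set.Ioo 0 R) := by
  obtain rfl : S = fun t => sinh (k * t) / k := funext hS
  have hS' : ∀ x, HasDerivAt (fun t => sinh (k * t) / k) (cosh (k * x)) x := fun x =>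
    (((hasDerivAt_id' x).const_mul k).sinh.div_const k).congr_deriv
      (by rw [mul_one, mul_div_cancel_right₀ _ hk.ne'])
  have hpos : ∀ x, 0 < x → 0 < sinh (k * x) / k := fun x hx =>
    div_pos (sinh_pos_iff.2 (mul_pos hk hx)) hk
  have hcosh : StrictMonoOn (fun x => cosh (k * x)) (Ici 0) := fun x hx y hy hxy =>
    cosh_strictMonoOn (mul_nonneg hk.le hx) (mul_nonneg hk.le hy) (by gcongr)
  have hEq : ∀ t ∈ Ioo 0 R, deriv E t / (sinh (k * t) / k) = _ := fun t ht =>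
    deriv_div_eq_neg_integral_pow_div_pow_succ (m - 2) (by fun_prop) hpos hE ht.1
      (ht.1.trans ht.2)
  refine ⟨fun t ht => ?_, fun x hx y hy hxy => ?_⟩
  · rw [hEq t ht, neg_neg_iff_pos]
    exact div_pos (intervalIntegral_pos_of_pos_on
      (Continuous.intervalIntegrable (by fun_prop) _ _)
      (fun s hs => pow_pos (hpos s hs.1) _) ht.1) (pow_pos (hpos t ht.1) _)
  · simp only [hEq x hx, hEq y hy, neg_lt_neg_iff]
    exact strictAntiOn_integral_pow_div_pow_succ (m - 2) hS' (by fun_prop) hcosh (by simp) hpos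
      hx.1 hy.1 hxy

/-- Markvorsen's Proposition 4, radial form, hyperbolic case: with `S(t) = sinh(kt)/k` and
`E(t) = ∫_t^R (1/S(σ)^(m-2)) ∫₀^σ S(s)^(m-2) ds dσ`, the function `t ↦ E'(t)/S(t)` is
negative and strictly increasing on `(0,R)`. -/
theorem stmt_6 (k : ℝ) (hk : 0 < k) (m : ℕ) (hm : 2 ≤ m) (R : ℝ) (hR : 0 < R)
    (S : ℝ → ℝ) (hS : ∀ t, S t = Real.sinh (k * t) / k)
    (E : ℝ → ℝ)
    (hE : ∀ t, E t = ∫ σ in t..R, (1 / S σ ^ (m - 2)) * ∫ s in (0:ℝ)..σ, S s ^ (m - 2)) :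
    (∀ t ∈ Set.Ioo 0 R, deriv E t / S t < 0) ∧
      StrictMonoOn (fun t => deriv E t / S t) (Set.Ioo 0 R) :=
  stmt_6_general k hk m R S hS E hE
end

section
/- Let k > 0, let m ≥ 2 be an integer, and let 0 < R < π/(2k). Set S(t) = sin(kt)/k and define E(t) = ∫_t^R (1/S(σ)^{m-2})·(∫₀^σ S(s)^{m-2} ds) dσ for t ∈ (0,R]. Then on the interval (0,R) the function t ↦ E'(t)/S(t) is negative and strictly monotone decreasing. -/
/-!
With `n = m - 2` and `I t = ∫₀ᵗ Sⁿ`, the fundamental theorem of calculus gives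
`E'(t) / S(t) = -I(t) / S(t)ⁿ⁺¹`, which is negative. The derivative of `I / Sⁿ⁺¹` has the sign of
`Sⁿ⁺¹ - (n + 1) S' I`, and this is positive because `S(t)ⁿ⁺¹ = ∫₀ᵗ (n + 1) S' Sⁿ` while
`S' = cos (k ·)` is strictly decreasing on `[0, R]`, i.e. `S` is strictly concave there.
-/

open Real Set intervalIntegral MeasureTheory

section

variable {S S' : ℝ → ℝ} (n : ℕ)

theorem pow_succ_eq_integral (hS : ∀ x, HasDerivAt S (S' x) x) (hS' : Continuous S')
    (hS0 : S 0 = 0) (t : ℝ) :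
    S t ^ (n + 1) = ∫ s in 0..t, (n + 1) * S' s * S s ^ n := by
  have hSc : Continuous S := continuous_iff_continuousAt.2 fun x => (hS x).continuousAt
  have hderiv : ∀ x ∈ uIcc 0 t,
      HasDerivAt (fun u => S u ^ (n + 1)) ((n + 1) * S' x * S x ^ n) x := fun x _ =>
    ((hS x).pow (n + 1)).congr_deriv (by rw [Nat.add_sub_cancel]; push_cast; ring)
  rw [integral_eq_sub_of_hasDerivAt hderiv ((by fun_prop : Continuous _).intervalIntegrable 0 t),
    hS0]
  simp

theorem succ_mul_deriv_mul_integral_pow_lt (hS : ∀ x, HasDerivAt S (S' x) x)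
    (hS' : Continuous S') (hS0 : S 0 = 0) {t : ℝ} (ht : 0 < t)
    (hanti : StrictAntiOn S' (Icc 0 t)) (hpos : ∀ s ∈ Ioc 0 t, 0 < S s) :
    (n + 1) * S' t * ∫ s in 0..t, S s ^ n < S t ^ (n + 1) := by
  have hSc : Continuous S := continuous_iff_continuousAt.2 fun x => (hS x).continuousAt
  have hle : ∀ s ∈ Ioc 0 t, (n + 1) * S' t * S s ^ n ≤ (n + 1) * S' s * S s ^ n := fun s hs =>
    mul_le_mul_of_nonneg_right
      (mul_le_mul_of_nonneg_left (hanti.antitoneOn ⟨hs.1.le, hs.2⟩ ⟨ht.le, le_rfl⟩ hs.2)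
        (by positivity))
      (pow_pos (hpos s hs) n).le
  have hlt : (n + 1) * S' t * S (t / 2) ^ n < (n + 1) * S' (t / 2) * S (t / 2) ^ n :=
    mul_lt_mul_of_pos_right
      (mul_lt_mul_of_pos_left (hanti ⟨by linarith, by linarith⟩ ⟨ht.le, le_rfl⟩ (by linarith))
        (by positivity))
      (pow_pos (hpos _ ⟨by linarith, by linarith⟩) n)
  rw [pow_succ_eq_integral n hS hS' hS0, ← intervalIntegral.integral_const_mul]
  exact integral_lt_integral_of_continuousOn_of_le_of_exists_lt ht (by fun_prop) (by fun_prop)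
    hle ⟨t / 2, ⟨by linarith, by linarith⟩, hlt⟩

theorem strictMonoOn_integral_pow_div_pow_succ (hS : ∀ x, HasDerivAt S (S' x) x)
    (hS' : Continuous S') (hS0 : S 0 = 0) {R : ℝ} (hanti : StrictAntiOn S' (Ico 0 R))
    (hpos : ∀ s ∈ Ioo 0 R, 0 < S s) :
    StrictMonoOn (fun t => (∫ s in 0..t, S s ^ n) / S t ^ (n + 1)) (Ioo 0 R) := by
  have hSc : Continuous S := continuous_iff_continuousAt.2 fun x => (hS x).continuousAt
  have hderiv : ∀ t ∈ Ioo 0 R, HasDerivAt (fun t => (∫ s in 0..t, S s ^ n) / S t ^ (n + 1))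
      ((S t ^ n * S t ^ (n + 1) - (∫ s in 0..t, S s ^ n) * (↑(n + 1) * S t ^ n * S' t)) /
        (S t ^ (n + 1)) ^ 2) t := fun t ht =>
    ((hSc.pow n).integral_hasStrictDerivAt 0 t).hasDerivAt.div ((hS t).pow (n + 1))
      (pow_pos (hpos t ht) _).ne'
  refine strictMonoOn_of_deriv_pos (convex_Ioo 0 R)
    (fun t ht => (hderiv t ht).continuousAt.continuousWithinAt) fun t ht => ?_
  rw [interior_Ioo] at ht
  rw [(hderiv t ht).deriv]
  have hkey := succ_mul_deriv_mul_integral_pow_lt n hS hS' hS0 ht.1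
    (hanti.mono (Icc_subset_Ico_right ht.2)) fun s hs => hpos s ⟨hs.1, hs.2.trans_lt ht.2⟩
  have hSn := pow_pos (hpos t ht) n
  refine div_pos ?_ (pow_pos (pow_pos (hpos t ht) _) 2)
  push_cast
  nlinarith

theorem integral_pow_pos (hSc : Continuous S) {t : ℝ} (ht : 0 < t)
    (hpos : ∀ s ∈ Ioo 0 t, 0 < S s) : 0 < ∫ s in 0..t, S s ^ n :=
  intervalIntegral_pos_of_pos_on ((hSc.pow n).intervalIntegrable 0 t)
    (fun s hs => pow_pos (hpos s hs) n) ht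

end

theorem hasDerivAt_integral_inv_pow_mul_integral_pow {S : ℝ → ℝ} (n : ℕ) (hSc : Continuous S)
    {R t : ℝ} (hS : ∀ s ∈ Ioc 0 R, S s ≠ 0) (ht : t ∈ Ioo 0 R) :
    HasDerivAt (fun t => ∫ σ in t..R, 1 / S σ ^ n * ∫ s in 0..σ, S s ^ n)
      (-(1 / S t ^ n * ∫ s in 0..t, S s ^ n)) t := by
  have hcont : ∀ σ ∈ Ioc 0 R,
      ContinuousAt (fun σ => 1 / S σ ^ n * ∫ s in 0..σ, S s ^ n) σ := fun σ hσ =>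
    (continuousAt_const.div (hSc.pow n).continuousAt (pow_ne_zero _ (hS σ hσ))).mul
      ((hSc.pow n).integral_hasStrictDerivAt 0 σ).hasDerivAt.continuousAt
  have hsub : uIcc t R ⊆ Ioc 0 R := by
    rw [uIcc_of_le ht.2.le]
    exact Icc_subset_Ioc_iff ht.2.le |>.2 ⟨ht.1, le_rfl⟩
  exact integral_hasDerivAt_left
    ((continuousOn_of_forall_continuousAt hcont).mono hsub).intervalIntegrable
    ((continuousOn_of_forall_continuousAt hcont).mono Ioo_subset_Ioc_self
      |>.stronglyMeasurableAtFilter isOpen_Ioo t ht)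
    (hcont t (Ioo_subset_Ioc_self ht))

theorem hasDerivAt_sin_mul_div {k : ℝ} (hk : k ≠ 0) (x : ℝ) :
    HasDerivAt (fun t => sin (k * t) / k) (cos (k * x)) x := by
  have := (((hasDerivAt_id x).const_mul k).sin).div_const k
  rwa [id, mul_one, mul_div_cancel_right₀ _ hk] at this

theorem sin_mul_div_pos {k t : ℝ} (hk : 0 < k) (ht : 0 < t) (hkt : k * t < π) :
    0 < sin (k * t) / k :=
  div_pos (sin_pos_of_pos_of_lt_pi (by positivity) hkt) hk

theorem strictAntiOn_cos_mul {k : ℝ} (hk : 0 < k) :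
    StrictAntiOn (fun t => cos (k * t)) (Icc 0 (π / k)) := fun a ha b hb hab =>
  strictAntiOn_cos ⟨by nlinarith [ha.1], by nlinarith [ha.2, mul_div_cancel₀ π hk.ne']⟩
    ⟨by nlinarith [hb.1], by nlinarith [hb.2, mul_div_cancel₀ π hk.ne']⟩ (by nlinarith)

theorem stmt_7_general (k : ℝ) (hk : 0 < k) (m : ℕ) (hm : 2 ≤ m) (R : ℝ)
    (hR' : R < Real.pi / (2 * k))
    (S : ℝ → ℝ) (hS : ∀ t, S t = Real.sin (k * t) / k)
    (E : ℝ → ℝ)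
    (hE : ∀ t, E t = ∫ σ in t..R, (1 / S σ ^ (m - 2)) * ∫ s in (0:ℝ)..σ, S s ^ (m - 2)) :
    (∀ t ∈ Set.Ioo 0 R, deriv E t / S t < 0) ∧
      StrictAntiOn (fun t => deriv E t / S t) (Set.Ioo 0 R) := by
  obtain ⟨n, rfl⟩ : ∃ n, m = n + 2 := ⟨m - 2, by omega⟩
  obtain rfl : S = fun t => sin (k * t) / k := funext hS
  obtain rfl := funext hE
  simp only [Nat.add_sub_cancel]
  have hRπ : R < π / k := hR'.trans_le <| div_le_div_of_nonneg_left pi_pos.le hk (by linarith)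
  have hpos : ∀ s ∈ Ioc 0 R, 0 < sin (k * s) / k := fun s hs =>
    sin_mul_div_pos hk hs.1 (by rw [lt_div_iff₀ hk] at hRπ; nlinarith [hs.2])
  have hquot : ∀ t ∈ Ioo 0 R, deriv (fun t => ∫ σ in t..R, 1 / (sin (k * σ) / k) ^ n *
      ∫ s in 0..σ, (sin (k * s) / k) ^ n) t / (sin (k * t) / k) =
      -((∫ s in 0..t, (sin (k * s) / k) ^ n) / (sin (k * t) / k) ^ (n + 1)) := by
    intro t ht
    rw [(hasDerivAt_integral_inv_pow_mul_integral_pow n (by fun_prop)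
      (fun s hs => (hpos s hs).ne') ht).deriv]
    ring
  have hmono := strictMonoOn_integral_pow_div_pow_succ n (hasDerivAt_sin_mul_div hk.ne')
    (by fun_prop) (by simp) ((strictAntiOn_cos_mul hk).mono (Ico_subset_Icc_self.trans
      (Icc_subset_Icc_right hRπ.le))) fun s hs => hpos s (Ioo_subset_Ioc_self hs)
  refine ⟨fun t ht => ?_, fun a ha b hb hab => ?_⟩
  · rw [hquot t ht, neg_lt_zero]
    exact div_pos (integral_pow_pos n (by fun_prop) ht.1
      fun s hs => hpos s ⟨hs.1, hs.2.le.trans ht.2.le⟩)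
      (pow_pos (hpos t (Ioo_subset_Ioc_self ht)) _)
  · simp only [hquot a ha, hquot b hb]
    exact neg_lt_neg (hmono ha hb hab)

/-- Markvorsen's Proposition 4, radial form, spherical case: with `S(t) = sin(kt)/k` and
`E(t) = ∫_t^R (1/S(σ)^(m-2)) ∫₀^σ S(s)^(m-2) ds dσ`, `0 < R < π/(2k)`, the function
`t ↦ E'(t)/S(t)` is negative and strictly decreasing on `(0,R)`. -/
theorem stmt_7 (k : ℝ) (hk : 0 < k) (m : ℕ) (hm : 2 ≤ m) (R : ℝ)
    (hR : 0 < R) (hR' : R < Real.pi / (2 * k))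
    (S : ℝ → ℝ) (hS : ∀ t, S t = Real.sin (k * t) / k)
    (E : ℝ → ℝ)
    (hE : ∀ t, E t = ∫ σ in t..R, (1 / S σ ^ (m - 2)) * ∫ s in (0:ℝ)..σ, S s ^ (m - 2)) :
    (∀ t ∈ Set.Ioo 0 R, deriv E t / S t < 0) ∧
      StrictAntiOn (fun t => deriv E t / S t) (Set.Ioo 0 R) :=
  stmt_7_general k hk m hm R hR' S hS E hE
end

section
/- Let n ≥ 2 be an integer, r > 0, and let f : [0,r] → ℝ be continuous with f(0) = 0 and f(t) > 0 for all t ∈ (0,r]. Set S(t) = f(t)^{n-1}, V(t) = ∫₀^t S(s) ds, and Λ = inf_{0 < t ≤ r} (1/4)·(S(t)/V(t))². Then for every continuously differentiable function u : [0,r] → ℝ with u(r) = 0, ∫₀^r u'(t)²·S(t) dt ≥ Λ·∫₀^r u(t)²·S(t) dt. -/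
/-!
Integrating by parts against the primitive `V` of the weight (`V' = S`, `V 0 = 0`, `u r = 0`)
gives `∫ u² S = -∫ 2 u u' V`. The infimum `Λ` says exactly that `4 Λ V² ≤ S²`, so the quadratic
form `Λ S x² + 4 Λ V x y + S y²` is nonnegative, i.e. `-4 Λ u u' V ≤ (Λ u² + u'²) S` pointwise.
Integrating, `2 Λ ∫ u² S ≤ Λ ∫ u² S + ∫ u'² S`.
-/

open Set MeasureTheory intervalIntegral

theorem neg_four_mul_le_mul_of_four_mul_sq_le {Λ s v x y : ℝ} (hΛ : 0 ≤ Λ) (hs : 0 ≤ s)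
    (hv : 4 * Λ * v ^ 2 ≤ s ^ 2) : -(4 * Λ * x * y * v) ≤ (Λ * x ^ 2 + y ^ 2) * s := by
  rcases hs.eq_or_lt with rfl | hs
  · have hΛv : Λ * v = 0 := by nlinarith [sq_nonneg (Λ * v)]
    linear_combination (-4 * x * y) * hΛv
  · -- `s` times the quadratic form is `Λ (s x + 2 v y)² + (s² - 4 Λ v²) y²`
    refine le_of_mul_le_mul_left ?_ hs
    nlinarith [mul_nonneg hΛ (sq_nonneg (s * x + 2 * v * y)),
      mul_nonneg (sub_nonneg.mpr hv) (sq_nonneg y)]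

theorem hasDerivAt_primitive_of_continuousOn {a b t : ℝ} {S : ℝ → ℝ}
    (hS : ContinuousOn S (Icc a b)) (ht : t ∈ Ioo a b) :
    HasDerivAt (fun x => ∫ s in a..x, S s) (S t) t :=
  integral_hasDerivAt_right
    ((hS.mono (Icc_subset_Icc_right ht.2.le)).intervalIntegrable_of_Icc ht.1.le)
    ((hS.mono Ioo_subset_Icc_self).stronglyMeasurableAtFilter isOpen_Ioo t ht)
    (hS.continuousAt (Icc_mem_nhds ht.1 ht.2))

theorem continuousOn_primitive_of_le {a b : ℝ} {S : ℝ → ℝ} (hab : a ≤ b)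
    (hS : IntegrableOn S (Icc a b)) : ContinuousOn (fun x => ∫ s in a..x, S s) (Icc a b) := by
  rw [← uIcc_of_le hab] at hS ⊢
  exact continuousOn_primitive_interval hS

theorem integral_sq_mul_eq_neg_integral_mul_primitive {a b : ℝ} {S u u' : ℝ → ℝ} (hab : a ≤ b)
    (hS : ContinuousOn S (Icc a b))
    (hu : ∀ t ∈ Icc a b, HasDerivWithinAt u (u' t) (Icc a b) t)
    (hu' : ContinuousOn u' (Icc a b)) (hub : u b = 0) :
    ∫ t in a..b, u t ^ 2 * S t = -∫ t in a..b, 2 * u t * u' t * ∫ s in a..t, S s := by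
  have hu_cont : ContinuousOn u (Icc a b) := fun t ht => (hu t ht).continuousWithinAt
  have h := integral_mul_deriv_eq_deriv_mul_of_hasDerivAt (u := fun t => u t ^ 2)
    (u' := fun t => 2 * u t * u' t) (v := fun x => ∫ s in a..x, S s) (v' := S)
    (by rw [uIcc_of_le hab]; exact hu_cont.pow 2)
    (by rw [uIcc_of_le hab]; exact continuousOn_primitive_of_le hab hS.integrableOn_Icc)
    (fun t ht => by
      rw [min_eq_left hab, max_eq_right hab] at ht
      have hut := (hu t (Ioo_subset_Icc_self ht)).hasDerivAt (Icc_mem_nhds ht.1 ht.2)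
      exact (hut.pow 2).congr_deriv (by push_cast; ring))
    (fun t ht => by
      rw [min_eq_left hab, max_eq_right hab] at ht
      exact hasDerivAt_primitive_of_continuousOn hS ht)
    (((continuousOn_const.mul hu_cont).mul hu').intervalIntegrable_of_Icc hab)
    (hS.intervalIntegrable_of_Icc hab)
  simpa [hub] using h

theorem mul_integral_sq_mul_le_integral_deriv_sq_mul {a b Λ : ℝ} {S u u' : ℝ → ℝ} (hab : a ≤ b)
    (hS : ContinuousOn S (Icc a b)) (hS_nonneg : ∀ t ∈ Ioo a b, 0 ≤ S t) (hΛ : 0 ≤ Λ)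
    (hΛS : ∀ t ∈ Ioo a b, 4 * Λ * (∫ s in a..t, S s) ^ 2 ≤ S t ^ 2)
    (hu : ∀ t ∈ Icc a b, HasDerivWithinAt u (u' t) (Icc a b) t)
    (hu' : ContinuousOn u' (Icc a b)) (hub : u b = 0) :
    Λ * ∫ t in a..b, u t ^ 2 * S t ≤ ∫ t in a..b, u' t ^ 2 * S t := by
  set V := fun x => ∫ s in a..x, S s
  have hu_cont : ContinuousOn u (Icc a b) := fun t ht => (hu t ht).continuousWithinAt
  have hA_int : IntervalIntegrable (fun t => u t ^ 2 * S t) volume a b :=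
    ((hu_cont.pow 2).mul hS).intervalIntegrable_of_Icc hab
  have hB_int : IntervalIntegrable (fun t => u' t ^ 2 * S t) volume a b :=
    ((hu'.pow 2).mul hS).intervalIntegrable_of_Icc hab
  have hC_int : IntervalIntegrable (fun t => 2 * u t * u' t * V t) volume a b :=
    (((continuousOn_const.mul hu_cont).mul hu').mul
      (continuousOn_primitive_of_le hab hS.integrableOn_Icc)).intervalIntegrable_of_Icc hab
  have hpointwise : ∀ t ∈ Ioo a b,
      2 * Λ * -(2 * u t * u' t * V t) ≤ Λ * (u t ^ 2 * S t) + u' t ^ 2 * S t := fun t ht => by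
    linarith [neg_four_mul_le_mul_of_four_mul_sq_le (x := u t) (y := u' t) hΛ (hS_nonneg t ht)
      (hΛS t ht)]
  have h : ∫ t in a..b, 2 * Λ * -(2 * u t * u' t * V t)
      ≤ ∫ t in a..b, (Λ * (u t ^ 2 * S t) + u' t ^ 2 * S t) :=
    integral_mono_on_of_le_Ioo hab (hC_int.neg.const_mul _) ((hA_int.const_mul _).add hB_int)
      hpointwise
  rw [intervalIntegral.integral_const_mul, intervalIntegral.integral_neg,
    intervalIntegral.integral_add (hA_int.const_mul _) hB_int,
    intervalIntegral.integral_const_mul,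
    ← integral_sq_mul_eq_neg_integral_mul_primitive hab hS hu hu' hub] at h
  linarith

theorem stmt_9_general (n : ℕ) (r : ℝ) (hr : 0 < r) (f : ℝ → ℝ)
    (hf_cont : ContinuousOn f (Set.Icc 0 r))
    (hf_pos : ∀ t ∈ Set.Ioc 0 r, 0 < f t)
    (S V : ℝ → ℝ) (hS : ∀ t, S t = f t ^ (n - 1))
    (hV : ∀ t, V t = ∫ s in (0:ℝ)..t, S s)
    (Λ : ℝ) (hΛ : Λ = sInf ((fun t => (1 / 4) * (S t / V t) ^ 2) '' Set.Ioc 0 r))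
    (u u' : ℝ → ℝ)
    (hu : ∀ t ∈ Set.Icc 0 r, HasDerivWithinAt u (u' t) (Set.Icc 0 r) t)
    (hu'_cont : ContinuousOn u' (Set.Icc 0 r))
    (hur : u r = 0) :
    (∫ t in (0:ℝ)..r, u' t ^ 2 * S t) ≥ Λ * ∫ t in (0:ℝ)..r, u t ^ 2 * S t := by
  have hS_cont : ContinuousOn S (Icc 0 r) := (hf_cont.pow _).congr fun t _ => hS t
  have hS_pos : ∀ t ∈ Ioc 0 r, 0 < S t := fun t ht => hS t ▸ pow_pos (hf_pos t ht) _
  have hV_pos : ∀ t ∈ Ioc 0 r, 0 < V t := fun t ht => hV t ▸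
    intervalIntegral_pos_of_pos_on
      ((hS_cont.mono (Icc_subset_Icc_right ht.2)).intervalIntegrable_of_Icc ht.1.le)
      (fun s hs => hS_pos s ⟨hs.1, hs.2.le.trans ht.2⟩) ht.1
  have hquot_nonneg : ∀ q ∈ (fun t => (1 / 4) * (S t / V t) ^ 2) '' Ioc 0 r, 0 ≤ q := by
    rintro _ ⟨t, -, rfl⟩
    positivity
  have hΛ_nonneg : 0 ≤ Λ := hΛ ▸ Real.sInf_nonneg hquot_nonneg
  have hΛS : ∀ t ∈ Ioo 0 r, 4 * Λ * (∫ s in (0:ℝ)..t, S s) ^ 2 ≤ S t ^ 2 := fun t ht => by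
    have hVt := hV_pos t (Ioo_subset_Ioc_self ht)
    have hle : Λ ≤ 1 / 4 * (S t / V t) ^ 2 :=
      hΛ ▸ csInf_le ⟨0, hquot_nonneg⟩ ⟨t, Ioo_subset_Ioc_self ht, rfl⟩
    rw [div_pow, ← mul_div_assoc, le_div_iff₀ (by positivity)] at hle
    rw [← hV]
    linarith
  exact mul_integral_sq_mul_le_integral_deriv_sq_mul hr.le hS_cont
    (fun t ht => (hS_pos t (Ioo_subset_Ioc_self ht)).le) hΛ_nonneg hΛS hu hu'_cont hur

/-- Radial form of the eigenvalue/Rayleigh-quotient bound: with `S(t) = f(t)^(n-1)`,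
`V(t) = ∫₀^t S`, `Λ = inf_{0<t≤r} (1/4)(S(t)/V(t))²`, every `C¹` function `u` on `[0,r]`
with `u(r) = 0` satisfies `∫₀^r u'² S ≥ Λ ∫₀^r u² S`. -/
theorem stmt_9 (n : ℕ) (hn : 2 ≤ n) (r : ℝ) (hr : 0 < r) (f : ℝ → ℝ)
    (hf_cont : ContinuousOn f (Set.Icc 0 r)) (hf0 : f 0 = 0)
    (hf_pos : ∀ t ∈ Set.Ioc 0 r, 0 < f t)
    (S V : ℝ → ℝ) (hS : ∀ t, S t = f t ^ (n - 1))
    (hV : ∀ t, V t = ∫ s in (0:ℝ)..t, S s)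
    (Λ : ℝ) (hΛ : Λ = sInf ((fun t => (1 / 4) * (S t / V t) ^ 2) '' Set.Ioc 0 r))
    (u u' : ℝ → ℝ)
    (hu : ∀ t ∈ Set.Icc 0 r, HasDerivWithinAt u (u' t) (Set.Icc 0 r) t)
    (hu'_cont : ContinuousOn u' (Set.Icc 0 r))
    (hur : u r = 0) :
    (∫ t in (0:ℝ)..r, u' t ^ 2 * S t) ≥ Λ * ∫ t in (0:ℝ)..r, u t ^ 2 * S t :=
  stmt_9_general n r hr f hf_cont hf_pos S V hS hV Λ hΛ u u' hu hu'_cont hur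
end

section
/- Let r > 0, let S : (0,r) → ℝ be continuous and positive, and let w : (0,r) → ℝ be continuously differentiable such that S·w is continuously differentiable, with (S·w)'(t)/S(t) ≥ d for all t ∈ (0,r) and |w(t)| ≤ s₀ for all t ∈ (0,r), where d > 0 and s₀ > 0 are constants. Then for every continuously differentiable function u with compact support contained in (0,r), ∫₀^r u'(t)²·S(t) dt ≥ (d²/(4·s₀²))·∫₀^r u(t)²·S(t) dt. -/
/-!
Put `g = S w`. Since `u` vanishes near both ends of `(0, r)`, the fundamental theorem of calculus
gives `∫₀^r (u² g)' = 0`. Pointwise on `(0, r)`, the bounds `g' ≥ d S` and `|w| ≤ s₀` together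
with `S (d |u| - 2 s₀ |u'|)² ≥ 0` give `d² u² S - 4 s₀² u'² S ≤ 2 d (u² g)'`, and integrating
yields `d² ∫ u² S ≤ 4 s₀² ∫ u'² S`.
-/

open Set MeasureTheory

theorem tsupport_subset_tsupport_of_forall_notMem {X α β : Type*} [TopologicalSpace X]
    [Zero α] [Zero β] {f : X → α} {g : X → β} (h : ∀ x ∉ tsupport g, f x = 0) :
    tsupport f ⊆ tsupport g :=
  closure_minimal (fun x hx => by_contra fun hg => hx (h x hg)) (isClosed_tsupport g)

theorem ContinuousOn.continuous_of_forall_notMem_tsupport {X α β : Type*} [TopologicalSpace X]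
    [TopologicalSpace α] [Zero α] [Zero β] {f : X → α} {g : X → β} {U : Set X}
    (hf : ContinuousOn f U) (hU : IsOpen U) (hg : tsupport g ⊆ U)
    (h : ∀ x ∉ tsupport g, f x = 0) : Continuous f :=
  hf.continuous_of_tsupport_subset hU ((tsupport_subset_tsupport_of_forall_notMem h).trans hg)

theorem intervalIntegral.integral_eq_zero_of_hasDerivAt_of_tsupport_subset {E : Type*}
    [NormedAddCommGroup E] [NormedSpace ℝ E] [CompleteSpace E] {F F' : ℝ → E} {a b : ℝ}
    (hab : a ≤ b) (hF : tsupport F ⊆ Ioo a b) (hderiv : ∀ x ∈ Ioo a b, HasDerivAt F (F' x) x)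
    (hint : IntervalIntegrable F' volume a b) : ∫ x in a..b, F' x = 0 := by
  have hcont : Continuous F := ContinuousOn.continuous_of_tsupport_subset
    (fun x hx => (hderiv x hx).continuousAt.continuousWithinAt) isOpen_Ioo hF
  have hzero : ∀ x ∉ Ioo a b, F x = 0 := fun x hx =>
    image_eq_zero_of_notMem_tsupport fun h => hx (hF h)
  rw [integral_eq_sub_of_hasDerivAt_of_le hab hcont.continuousOn hderiv hint,
    hzero a (by simp), hzero b (by simp), sub_zero]

section SquareTimesWeight

variable {u g : ℝ → ℝ} {a b : ℝ}

theorem hasDerivAt_sq_mul (hu : ContDiff ℝ 1 u) (hg : ContDiffOn ℝ 1 g (Ioo a b)) {x : ℝ}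
    (hx : x ∈ Ioo a b) :
    HasDerivAt (fun t => u t ^ 2 * g t) (2 * u x * deriv u x * g x + u x ^ 2 * deriv g x) x := by
  have hux : HasDerivAt u (deriv u x) x := (hu.differentiable one_ne_zero x).hasDerivAt
  have hgx : HasDerivAt g (deriv g x) x :=
    ((hg.differentiableOn one_ne_zero).differentiableAt (isOpen_Ioo.mem_nhds hx)).hasDerivAt
  exact ((hux.fun_pow 2).fun_mul hgx).congr_deriv (by push_cast; ring)

theorem continuous_deriv_sq_mul (hu : ContDiff ℝ 1 u) (hsupp : tsupport u ⊆ Ioo a b)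
    (hg : ContDiffOn ℝ 1 g (Ioo a b)) :
    Continuous fun t => 2 * u t * deriv u t * g t + u t ^ 2 * deriv g t := by
  have hdu : Continuous (deriv u) := hu.continuous_deriv le_rfl
  have hdg : ContinuousOn (deriv g) (Ioo a b) :=
    hg.continuousOn_deriv_of_isOpen isOpen_Ioo le_rfl
  refine ContinuousOn.continuous_of_forall_notMem_tsupport ?_ isOpen_Ioo hsupp fun x hx => ?_
  · exact ((continuous_const.mul hu.continuous).mul hdu).continuousOn.mul hg.continuousOn
      |>.add ((hu.continuous.pow 2).continuousOn.mul hdg)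
  · simp [image_eq_zero_of_notMem_tsupport hx, deriv_of_notMem_tsupport hx]

theorem integral_deriv_sq_mul_eq_zero (hab : a ≤ b) (hu : ContDiff ℝ 1 u)
    (hsupp : tsupport u ⊆ Ioo a b) (hg : ContDiffOn ℝ 1 g (Ioo a b)) :
    ∫ t in a..b, (2 * u t * deriv u t * g t + u t ^ 2 * deriv g t) = 0 := by
  refine intervalIntegral.integral_eq_zero_of_hasDerivAt_of_tsupport_subset hab ?_
    (fun x hx => hasDerivAt_sq_mul hu hg hx)
    ((continuous_deriv_sq_mul hu hsupp hg).intervalIntegrable _ _)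
  refine (tsupport_subset_tsupport_of_forall_notMem fun x hx => ?_).trans hsupp
  simp [image_eq_zero_of_notMem_tsupport hx]

end SquareTimesWeight

theorem sq_mul_sub_le_of_le_of_abs_le {x y s v g' d s₀ : ℝ} (hs : 0 ≤ s) (hd : 0 ≤ d)
    (hg' : d * s ≤ g') (hv : |v| ≤ s₀) :
    d ^ 2 * (x ^ 2 * s) - 4 * s₀ ^ 2 * (y ^ 2 * s) ≤
      2 * d * (2 * x * y * (s * v) + x ^ 2 * g') := by
  have hxyv : -(x * y * v) ≤ |x| * |y| * s₀ := calc
    -(x * y * v) ≤ |x * y * v| := neg_le_abs _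
    _ = |x| * |y| * |v| := by rw [abs_mul, abs_mul]
    _ ≤ |x| * |y| * s₀ := by gcongr
  have hx2 : d * s * x ^ 2 ≤ g' * x ^ 2 := by gcongr
  have hsquare : 0 ≤ s * (d * |x| - 2 * s₀ * |y|) ^ 2 := by positivity
  rw [sub_sq, mul_pow, mul_pow, sq_abs, sq_abs] at hsquare
  linear_combination (4 * d * s) * hxyv + (2 * d) * hx2 + hsquare

theorem stmt_10_general (r : ℝ) (hr : 0 < r) (S w : ℝ → ℝ) (d s₀ : ℝ) (hd : 0 < d) (hs₀ : 0 < s₀)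
    (hS_cont : ContinuousOn S (Set.Ioo 0 r)) (hS_pos : ∀ t ∈ Set.Ioo 0 r, 0 < S t)
    (hSw : ContDiffOn ℝ 1 (fun t => S t * w t) (Set.Ioo 0 r))
    (hdiv : ∀ t ∈ Set.Ioo 0 r, deriv (fun t => S t * w t) t / S t ≥ d)
    (hwb : ∀ t ∈ Set.Ioo 0 r, |w t| ≤ s₀)
    (u : ℝ → ℝ) (hu : ContDiff ℝ 1 u)
    (hsupp : tsupport u ⊆ Set.Ioo 0 r) :
    (∫ t in (0:ℝ)..r, deriv u t ^ 2 * S t) ≥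
      d ^ 2 / (4 * s₀ ^ 2) * ∫ t in (0:ℝ)..r, u t ^ 2 * S t := by
  have hint : ∀ f : ℝ → ℝ, ContinuousOn f (Ioo 0 r) → (∀ t ∉ tsupport u, f t = 0) →
      IntervalIntegrable f volume 0 r := fun f hf hf0 =>
    (hf.continuous_of_forall_notMem_tsupport isOpen_Ioo hsupp hf0).intervalIntegrable _ _
  have hA := hint (fun t => u t ^ 2 * S t) ((hu.continuous.pow 2).continuousOn.mul hS_cont)
    fun t ht => by simp [image_eq_zero_of_notMem_tsupport ht]
  have hB := hint (fun t => deriv u t ^ 2 * S t)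
    (((hu.continuous_deriv le_rfl).pow 2).continuousOn.mul hS_cont)
    fun t ht => by simp [deriv_of_notMem_tsupport ht]
  have hbound : d ^ 2 * (∫ t in (0:ℝ)..r, u t ^ 2 * S t)
      - 4 * s₀ ^ 2 * (∫ t in (0:ℝ)..r, deriv u t ^ 2 * S t) ≤ 0 := calc
    _ = ∫ t in (0:ℝ)..r, (d ^ 2 * (u t ^ 2 * S t) - 4 * s₀ ^ 2 * (deriv u t ^ 2 * S t)) := by
      rw [intervalIntegral.integral_sub (hA.const_mul _) (hB.const_mul _),
        intervalIntegral.integral_const_mul, intervalIntegral.integral_const_mul]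
    _ ≤ ∫ t in (0:ℝ)..r, 2 * d * (2 * u t * deriv u t * (S t * w t)
          + u t ^ 2 * deriv (fun t => S t * w t) t) :=
      intervalIntegral.integral_mono_on_of_le_Ioo hr.le ((hA.const_mul _).sub (hB.const_mul _))
        (((continuous_deriv_sq_mul hu hsupp hSw).intervalIntegrable _ _).const_mul _)
        fun t ht => sq_mul_sub_le_of_le_of_abs_le (hS_pos t ht).le hd.le
          ((le_div_iff₀ (hS_pos t ht)).mp (hdiv t ht)) (hwb t ht)
    _ = 0 := by
      rw [intervalIntegral.integral_const_mul, integral_deriv_sq_mul_eq_zero hr.le hu hsupp hSw,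
        mul_zero]
  rw [ge_iff_le, div_mul_eq_mul_div, div_le_iff₀ (by positivity)]
  linarith

/-- One-dimensional weighted Bessa–Montenegro estimate: if `(S·w)'/S ≥ d > 0` and `|w| ≤ s₀`
on `(0,r)`, then every `C¹` function `u` compactly supported in `(0,r)` satisfies
`∫₀^r u'² S ≥ (d²/(4 s₀²)) ∫₀^r u² S`. -/
theorem stmt_10 (r : ℝ) (hr : 0 < r) (S w : ℝ → ℝ) (d s₀ : ℝ) (hd : 0 < d) (hs₀ : 0 < s₀)
    (hS_cont : ContinuousOn S (Set.Ioo 0 r)) (hS_pos : ∀ t ∈ Set.Ioo 0 r, 0 < S t)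
    (hw : ContDiffOn ℝ 1 w (Set.Ioo 0 r))
    (hSw : ContDiffOn ℝ 1 (fun t => S t * w t) (Set.Ioo 0 r))
    (hdiv : ∀ t ∈ Set.Ioo 0 r, deriv (fun t => S t * w t) t / S t ≥ d)
    (hwb : ∀ t ∈ Set.Ioo 0 r, |w t| ≤ s₀)
    (u : ℝ → ℝ) (hu : ContDiff ℝ 1 u) (hu_supp : HasCompactSupport u)
    (hsupp : tsupport u ⊆ Set.Ioo 0 r) :
    (∫ t in (0:ℝ)..r, deriv u t ^ 2 * S t) ≥
      d ^ 2 / (4 * s₀ ^ 2) * ∫ t in (0:ℝ)..r, u t ^ 2 * S t :=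
  stmt_10_general r hr S w d s₀ hd hs₀ hS_cont hS_pos hSw hdiv hwb u hu hsupp
end
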